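/- arXiv:2601.16290 — 3 statements merged into one kernel-verified Lean document; each statement's English description precedes it below -/
import Mathlib

section
/- Let E be a real Banach space, A : E →L[ℝ] E, d ∈ E, δ > 0, and let z : ℝ → E be differentiable on [0, δ] with z'(t) = A z(t) + d for all t ∈ [0, δ]. Define ψ = (exp(δ‖A‖) − 1)‖z 0‖ + (exp(δ‖A‖) − 1)‖d‖/‖A‖ if ‖A‖ > 0, and ψ = δ‖d‖ if A = 0. Then for all t ∈ [0, δ], ‖z(t) − z(0)‖ ≤ ψ. -/
open Set Real

/-- Deviation bound (paper's Lemma 3, Appendix A): for the linear system `ż = A z + d` on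
`[0, δ]`, the state deviates from its initial value by at most
`ψ = (exp (δ‖A‖) - 1) ‖z 0‖ + (exp (δ‖A‖) - 1) ‖d‖ / ‖A‖` when `‖A‖ > 0`,
and by at most `ψ = δ ‖d‖` when `A = 0` (i.e. `‖A‖ = 0`). -/
theorem stmt_3 {E : Type*} [NormedAddCommGroup E] [NormedSpace ℝ E] [CompleteSpace E]
    (A : E →L[ℝ] E) (d : E) (δ : ℝ) (hδ : 0 < δ) (z : ℝ → E)
    (hz : ∀ t ∈ Set.Icc (0:ℝ) δ, HasDerivWithinAt z (A (z t) + d) (Set.Icc (0:ℝ) δ) t)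
    (ψ : ℝ)
    (hψ : ψ = if 0 < ‖A‖ then
        (Real.exp (δ * ‖A‖) - 1) * ‖z 0‖ + (Real.exp (δ * ‖A‖) - 1) * ‖d‖ / ‖A‖
      else δ * ‖d‖) :
    ∀ t ∈ Set.Icc (0:ℝ) δ, ‖z t - z 0‖ ≤ ψ := by
  set K := ‖A‖ with hK
  set ε := K * ‖z 0‖ + ‖d‖ with hε
  have hcont : ContinuousOn (fun t => z t - z 0) (Icc 0 δ) := fun t ht =>
    ((hz t ht).continuousWithinAt).sub continuousWithinAt_const
  have hderiv : ∀ t ∈ Ico (0:ℝ) δ,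
      HasDerivWithinAt (fun t => z t - z 0) (A (z t) + d) (Ici t) t := by
    intro t ht
    exact ((hz t (Ico_subset_Icc_self ht)).sub_const (z 0)).mono_of_mem_nhdsWithin
      (Icc_mem_nhdsGE_of_mem ht)
  have hbound : ∀ t ∈ Ico (0:ℝ) δ, ‖A (z t) + d‖ ≤ K * ‖z t - z 0‖ + ε := by
    intro t ht
    have h1 : A (z t) + d = A (z t - z 0) + (A (z 0) + d) := by
      rw [map_sub]; abel
    rw [h1]
    calc ‖A (z t - z 0) + (A (z 0) + d)‖ ≤ ‖A (z t - z 0)‖ + ‖A (z 0) + d‖ := norm_add_le _ _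
      _ ≤ K * ‖z t - z 0‖ + (K * ‖z 0‖ + ‖d‖) := by
          gcongr
          · exact A.le_opNorm _
          · exact le_trans (norm_add_le _ _) (by gcongr; exact A.le_opNorm _)
  have ha : ‖z 0 - z 0‖ ≤ 0 := by simp
  have key := norm_le_gronwallBound_of_norm_deriv_right_le hcont hderiv ha hbound
  intro t ht
  have h := key t ht
  simp only [sub_zero] at h
  refine h.trans ?_
  rcases eq_or_lt_of_le (norm_nonneg A) with h0 | h0
  · -- K = 0
    rw [hψ, if_neg (not_lt.2 h0.ge)]
    have hK0 : K = 0 := h0.symm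
    have hεd : ε = ‖d‖ := by rw [hε, hK0]; ring
    rw [hK0, gronwallBound_K0, hεd]
    simp only
    nlinarith [norm_nonneg d, ht.1, ht.2]
  · -- K > 0
    rw [hψ, if_pos h0]
    rw [gronwallBound_of_K_ne_0 (ne_of_gt h0)]
    simp only [zero_mul, zero_add]
    have hexp : Real.exp (K * t) ≤ Real.exp (δ * K) := by
      apply Real.exp_le_exp.2
      rw [mul_comm δ K]
      exact mul_le_mul_of_nonneg_left ht.2 (le_of_lt h0)
    have h1 : Real.exp (K * t) - 1 ≥ 0 := by
      nlinarith [Real.add_one_le_exp (K * t), mul_nonneg h0.le ht.1]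
    have hεK : ε / K * (Real.exp (K * t) - 1) ≤ ε / K * (Real.exp (δ * K) - 1) := by
      apply mul_le_mul_of_nonneg_left (by linarith) (div_nonneg (by positivity) h0.le)
    refine hεK.trans (le_of_eq ?_)
    rw [hε]
    field_simp
    linear_combination (Real.exp (K * δ) - 1) * ‖z 0‖ * (mul_inv_cancel₀ (ne_of_gt h0) : K * K⁻¹ = 1)
end

section
/- Let E be a real Banach space, A : E →L[ℝ] E, d ∈ E, δ > 0, and let z : ℝ → E be differentiable on [0, δ] with z'(t) = A z(t) + d for all t ∈ [0, δ]. Define ψ = (exp(δ‖A‖) − 1)‖z 0‖ + (exp(δ‖A‖) − 1)‖d‖/‖A‖ if ‖A‖ > 0, and ψ = δ‖d‖ if A = 0. Let h : E →L[ℝ] ℝ be a continuous linear functional and b ∈ ℝ. If h(z 0) + ‖h‖ · ψ ≤ b, then h(z t) ≤ b for all t ∈ [0, δ]. -/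
/-- Paper's Lemma 3 (Appendix A): if the half-space constraint `h x ≤ b` holds at the initial
state with margin `‖h‖ ψ`, where `ψ` bounds the maximal drift of `ż = A z + d` over `[0, δ]`,
then the constraint holds at every continuous time in `[0, δ]`. -/
theorem stmt_4 {E : Type*} [NormedAddCommGroup E] [NormedSpace ℝ E] [CompleteSpace E]
    (A : E →L[ℝ] E) (d : E) (δ : ℝ) (hδ : 0 < δ) (z : ℝ → E)
    (hz : ∀ t ∈ Set.Icc (0:ℝ) δ, HasDerivWithinAt z (A (z t) + d) (Set.Icc (0:ℝ) δ) t)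
    (ψ : ℝ)
    (hψ : ψ = if 0 < ‖A‖ then
        (Real.exp (δ * ‖A‖) - 1) * ‖z 0‖ + (Real.exp (δ * ‖A‖) - 1) * ‖d‖ / ‖A‖
      else δ * ‖d‖)
    (h : E →L[ℝ] ℝ) (b : ℝ) (hb : h (z 0) + ‖h‖ * ψ ≤ b) :
    ∀ t ∈ Set.Icc (0:ℝ) δ, h (z t) ≤ b := by
  set K := ‖A‖ with hK
  set ε := ‖A (z 0) + d‖ with hε
  -- Grönwall bound on ‖z t - z 0‖
  have key : ∀ t ∈ Set.Icc (0:ℝ) δ, ‖z t - z 0‖ ≤ gronwallBound 0 K ε (t - 0) := by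
    apply norm_le_gronwallBound_of_norm_deriv_right_le (f' := fun t => A (z t) + d)
    · exact (ContinuousOn.sub (fun t ht => (hz t ht).continuousWithinAt) continuousOn_const)
    · intro x hx
      have hx' : x ∈ Set.Icc (0:ℝ) δ := ⟨hx.1, hx.2.le⟩
      have := ((hz x hx').sub_const (z 0)).mono_of_mem_nhdsWithin (Icc_mem_nhdsGE_of_mem hx)
      simpa using this
    · simp
    · intro x hx
      have hx' : x ∈ Set.Icc (0:ℝ) δ := ⟨hx.1, hx.2.le⟩
      have : A (z x) + d = A (z x - z 0) + (A (z 0) + d) := by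
        rw [map_sub]; abel
      rw [this]
      calc ‖A (z x - z 0) + (A (z 0) + d)‖ ≤ ‖A (z x - z 0)‖ + ε := norm_add_le _ _
        _ ≤ K * ‖z x - z 0‖ + ε := by
            exact add_le_add_left (A.le_opNorm _) _
  have hψ' : ∀ t ∈ Set.Icc (0:ℝ) δ, ‖z t - z 0‖ ≤ ψ := by
    intro t ht
    refine (key t ht).trans ?_
    have hεle : ε ≤ K * ‖z 0‖ + ‖d‖ :=
      (norm_add_le _ _).trans (add_le_add_left (A.le_opNorm _) _)
    rcases lt_or_ge 0 K with hKpos | hKnonpos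
    · rw [hψ, if_pos hKpos, gronwallBound_of_K_ne_0 hKpos.ne']
      simp only [zero_mul, zero_add, sub_zero]
      have hexp : Real.exp (K * t) - 1 ≤ Real.exp (δ * K) - 1 := by
        have : K * t ≤ δ * K := by nlinarith [ht.2]
        simpa using Real.exp_le_exp.2 this
      have hexp0 : (0:ℝ) ≤ Real.exp (K * t) - 1 := by
        have : (0:ℝ) ≤ K * t := mul_nonneg hKpos.le ht.1
        simpa using Real.one_le_exp this
      calc ε / K * (Real.exp (K * t) - 1)
          ≤ (K * ‖z 0‖ + ‖d‖) / K * (Real.exp (δ * K) - 1) := by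
            apply mul_le_mul ((div_le_div_iff_of_pos_right hKpos).2 hεle)
              hexp hexp0
            positivity
        _ = (Real.exp (δ * K) - 1) * ‖z 0‖ + (Real.exp (δ * K) - 1) * ‖d‖ / K := by
            field_simp
    · have hK0 : K = 0 := le_antisymm hKnonpos (norm_nonneg _)
      have hA0 : A = 0 := by
        ext x; simpa using le_antisymm ((A.le_opNorm x).trans (by rw [← hK]; simp [hK0]))
          (norm_nonneg _)
      rw [hψ, if_neg (by rw [hK0]; exact lt_irrefl 0), hK0]
      rw [gronwallBound_K0]
      have : ε = ‖d‖ := by rw [hε, hA0]; simp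
      rw [this]
      simp only [sub_zero, zero_add]
      have := ht.1; have := ht.2
      nlinarith [norm_nonneg d]
  intro t ht
  have h1 : h (z t) = h (z 0) + h (z t - z 0) := by rw [map_sub]; ring
  have h2 : h (z t - z 0) ≤ ‖h‖ * ψ := by
    calc h (z t - z 0) ≤ ‖h (z t - z 0)‖ := le_abs_self _
      _ ≤ ‖h‖ * ‖z t - z 0‖ := h.le_opNorm _
      _ ≤ ‖h‖ * ψ := mul_le_mul_of_nonneg_left (hψ' t ht) (norm_nonneg _)
  linarith
end

section
/- Let E be a real Banach space, A : E →L[ℝ] E, Δ ≥ 0, H ⊆ E with ‖v‖ ≤ ρ for all v ∈ H, and set r = exp(Δ‖A‖) · ρ. Define the Pontryagin difference of a set S ⊆ E with a set B ⊆ E as S ⊖ B = {a ∈ E | ∀ e ∈ B, a + e ∈ S}. Let f : ℝ → E and let x, y : ℝ → E be differentiable on [0, Δ] with x'(t) = A (x t) + f t and y'(t) = A (y t) + f t for all t ∈ [0, Δ], and suppose x 0 − y 0 ∈ H. Then for any set S ⊆ E and any t ∈ [0, Δ], if y(t) ∈ S ⊖ closedBall(0, r), then x(t) ∈ S. -/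
/-- The Pontryagin set difference `S ⊖ B = {a | ∀ e ∈ B, a + e ∈ S}`. -/
def pontryaginDiff {E : Type*} [AddCommGroup E] (S B : Set E) : Set E :=
  {a : E | ∀ e ∈ B, a + e ∈ S}

/-- Paper's Corollary 1: if two trajectories of the linear system evolve under the same forcing
from initial states differing by an element of `H` (whose elements have norm at most `ρ`), and
the nominal trajectory `y` satisfies a constraint set `S` tightened (Pontryagin difference) by
the closed ball of radius `r = exp (Δ * ‖A‖) * ρ`, then the true trajectory `x` satisfies the
untightened constraint `S` at every time in `[0, Δ]`. -/
theorem stmt_8 {E : Type*} [NormedAddCommGroup E] [NormedSpace ℝ E] [CompleteSpace E]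
    (A : E →L[ℝ] E) (Δ : ℝ) (hΔ : 0 ≤ Δ) (H : Set E) (ρ : ℝ)
    (hH : ∀ v ∈ H, ‖v‖ ≤ ρ) (r : ℝ) (hr : r = Real.exp (Δ * ‖A‖) * ρ)
    (f : ℝ → E) (x y : ℝ → E)
    (hx : ∀ t ∈ Set.Icc (0:ℝ) Δ, HasDerivWithinAt x (A (x t) + f t) (Set.Icc (0:ℝ) Δ) t)
    (hy : ∀ t ∈ Set.Icc (0:ℝ) Δ, HasDerivWithinAt y (A (y t) + f t) (Set.Icc (0:ℝ) Δ) t)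
    (h0 : x 0 - y 0 ∈ H) :
    ∀ (S : Set E), ∀ t ∈ Set.Icc (0:ℝ) Δ,
      y t ∈ pontryaginDiff S (Metric.closedBall (0 : E) r) → x t ∈ S := by
  intro S t ht hyS
  set z : ℝ → E := fun t => x t - y t with hz
  have hρ : 0 ≤ ρ := le_trans (norm_nonneg _) (hH _ h0)
  have hzc : ContinuousOn z (Set.Icc (0:ℝ) Δ) :=
    fun s hs => ((hx s hs).continuousWithinAt.sub (hy s hs).continuousWithinAt)
  have hz' : ∀ s ∈ Set.Ico (0:ℝ) Δ, HasDerivWithinAt z (A (z s)) (Set.Ici s) s := by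
    intro s hs
    have h1 : HasDerivWithinAt z (A (z s)) (Set.Icc (0:ℝ) Δ) s := by
      have := (hx s ⟨hs.1, hs.2.le⟩).sub (hy s ⟨hs.1, hs.2.le⟩)
      simpa [hz, map_sub, Pi.sub_def] using this
    exact h1.mono_of_mem_nhdsWithin (Icc_mem_nhdsGE_of_mem ⟨hs.1, hs.2⟩)
  have hbound : ∀ s ∈ Set.Ico (0:ℝ) Δ, ‖A (z s)‖ ≤ ‖A‖ * ‖z s‖ + 0 := by
    intro s _; simpa using A.le_opNorm (z s)
  have key := norm_le_gronwallBound_of_norm_deriv_right_le hzc hz' (hH _ h0) hbound t ht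
  rw [gronwallBound_ε0] at key
  have hle : ‖z t‖ ≤ r := by
    rw [hr]
    calc ‖z t‖ ≤ ρ * Real.exp (‖A‖ * (t - 0)) := key
    _ ≤ Real.exp (Δ * ‖A‖) * ρ := by
        rw [mul_comm]
        apply mul_le_mul_of_nonneg_right _ hρ
        apply Real.exp_le_exp.2
        rw [mul_comm]
        exact mul_le_mul_of_nonneg_right (by linarith [ht.2]) (norm_nonneg A)
  have := hyS (z t) (by simpa [Metric.mem_closedBall, dist_eq_norm] using hle)
  simpa [hz] using this
end
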